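/- For the Frank–Wolfe iterates, define E(t_j) = a_{t_j} F(x(t_j)) − √a_{t_j} F(x*) where √a_{t_j} = e^{t_j/(1+t_j)}. If E(t_j) ≤ 0, then E(t_{j+1}) − E(t_j) ≥ −(nL/2)(√a_{t_{j+1}} − √a_{t_j})². -/

import Mathlib

/-- The harmonic number `H j = ∑_{k=1}^j 1/k` (with `H 0 = 0`). -/
noncomputable def harmonicNum (j : ℕ) : ℝ := ∑ k ∈ Finset.range j, (1 : ℝ) / (k + 1)

/-- `H_{2,j} = ∑_{k=1}^j 1/k²`. -/
noncomputable def harmonicNum2 (j : ℕ) : ℝ := ∑ k ∈ Finset.range j, (1 : ℝ) / ((k : ℝ) + 1) ^ 2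

/-- The time values `t_j = 1/(1 - ln(1 + H_j/H_T)) - 1` of the Frank–Wolfe algorithm. -/
noncomputable def fwTime (T j : ℕ) : ℝ :=
  1 / (1 - Real.log (1 + harmonicNum j / harmonicNum T)) - 1

/-- The Frank–Wolfe step ratio `e^{-1/(1+t_j) + 1/(1+t_{j+1})}`. -/
noncomputable def fwRatio (T j : ℕ) : ℝ :=
  Real.exp (-(1 / (1 + fwTime T j)) + 1 / (1 + fwTime T (j + 1)))

/-- `√a_{t_j} = e^{t_j/(1+t_j)}`. -/
noncomputable def fwSqa (T j : ℕ) : ℝ := Real.exp (fwTime T j / (1 + fwTime T j))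

/-- `F : [0,1]^n → ℝ` is DR-submodular: for all `x ≤ y` in `[0,1]^n`, coordinates `i` and
`a > 0` with `x + a·e_i, y + a·e_i ∈ [0,1]^n`, one has
`F(x + a·e_i) - F(x) ≥ F(y + a·e_i) - F(y)`. -/
def DRSubmodular {n : ℕ} (F : (Fin n → ℝ) → ℝ) : Prop :=
  ∀ x y : Fin n → ℝ, x ∈ Set.Icc (0 : Fin n → ℝ) 1 → y ∈ Set.Icc (0 : Fin n → ℝ) 1 →
    x ≤ y → ∀ i : Fin n, ∀ a : ℝ, 0 < a →
      x + a • (Pi.single i 1 : Fin n → ℝ) ∈ Set.Icc (0 : Fin n → ℝ) 1 →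
      y + a • (Pi.single i 1 : Fin n → ℝ) ∈ Set.Icc (0 : Fin n → ℝ) 1 →
      F (y + a • (Pi.single i 1 : Fin n → ℝ)) - F y ≤
        F (x + a • (Pi.single i 1 : Fin n → ℝ)) - F x

/-- The continuous linear map `y ↦ ⟨g, y⟩ = ∑ i, g i * y i` on `ℝⁿ`. -/
noncomputable def gradCLM {n : ℕ} (g : Fin n → ℝ) : (Fin n → ℝ) →L[ℝ] ℝ :=
  ∑ i, g i • (ContinuousLinearMap.proj i : (Fin n → ℝ) →L[ℝ] ℝ)

/-- `gradF` is the gradient of `F` on the box `[0,1]^n`: at each point of the box, `F` is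
differentiable within the box with derivative `y ↦ ⟨gradF z, y⟩`. -/
def HasGradientOnBox {n : ℕ} (F : (Fin n → ℝ) → ℝ) (gradF : (Fin n → ℝ) → Fin n → ℝ) : Prop :=
  ∀ z ∈ Set.Icc (0 : Fin n → ℝ) 1, HasFDerivWithinAt F (gradCLM (gradF z)) (Set.Icc 0 1) z

/-!
DR-submodularity makes `∇F` antitone on the box, so `F` is concave along nonnegative directions.
For the iterate `z = x(t_j)` this gives
`⟨∇F(z), x* - z⟩ ≥ F(z ⊔ x*) + F(z ⊓ x*) - 2 F(z) ≥ F(x*) / √a_{t_j} - 2 F(z)`,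
because every coordinate of `z` is at most `1 - 1/√a_{t_j}` (the step ratio is
`√a_{t_j} / √a_{t_{j+1}}`). With `L`-smoothness along the step and the Frank–Wolfe choice of
`v_j`, the increment of `E` is at least
`(√a_{t_{j+1}} - √a_{t_j})² (F(x*) / √a_{t_j} - F(z) - nL/2)`, and `F(x*) / √a_{t_j} ≥ F(z)` is
exactly `E(t_j) ≤ 0`.
-/

open Set Filter Topology

section Box

variable {n : ℕ}

lemma gradCLM_apply (g y : Fin n → ℝ) : gradCLM g y = g ⬝ᵥ y := by
  simp [gradCLM, dotProduct]

lemma mem_box_iff {p : Fin n → ℝ} : p ∈ Icc (0 : Fin n → ℝ) 1 ↔ ∀ i, p i ∈ Icc (0 : ℝ) 1 := by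
  simp [mem_Icc, Pi.le_def, forall_and]

lemma add_smul_single_mem_box {p : Fin n → ℝ} (hp : p ∈ Icc 0 1) {i : Fin n} {a : ℝ}
    (ha : p i + a ∈ Icc (0 : ℝ) 1) : p + a • (Pi.single i 1 : Fin n → ℝ) ∈ Icc 0 1 := by
  rw [mem_box_iff] at hp ⊢
  intro j
  rcases eq_or_ne j i with rfl | hj
  · simpa using ha
  · simpa [hj] using hp j

lemma sub_smul_single_mem_box {p : Fin n → ℝ} (hp : p ∈ Icc 0 1) {i : Fin n} {a : ℝ}
    (ha : p i - a ∈ Icc (0 : ℝ) 1) : p - a • (Pi.single i 1 : Fin n → ℝ) ∈ Icc 0 1 := by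
  rw [sub_eq_add_neg, ← neg_smul]
  exact add_smul_single_mem_box hp ha

lemma sum_sq_sub_le_card {z w : Fin n → ℝ} (hz : z ∈ Icc 0 1) (hw : w ∈ Icc 0 1) :
    ∑ i, (w i - z i) ^ 2 ≤ n := by
  calc ∑ i, (w i - z i) ^ 2 ≤ ∑ _i : Fin n, (1 : ℝ) := by
        refine Finset.sum_le_sum fun i _ => ?_
        have hzi := mem_box_iff.1 hz i
        have hwi := mem_box_iff.1 hw i
        nlinarith [hzi.1, hzi.2, hwi.1, hwi.2]
    _ = n := by simp

end Box

section Gradient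

variable {n : ℕ} {F : (Fin n → ℝ) → ℝ} {gradF : (Fin n → ℝ) → Fin n → ℝ}

lemma HasGradientOnBox.hasDerivWithinAt_comp_line (hgrad : HasGradientOnBox F gradF)
    {p d : Fin n → ℝ} {D : Set ℝ} (hD : MapsTo (fun s : ℝ => p + s • d) D (Icc 0 1))
    {s : ℝ} (hs : s ∈ D) :
    HasDerivWithinAt (fun s : ℝ => F (p + s • d)) (gradF (p + s • d) ⬝ᵥ d) D s := by
  have hline : HasDerivAt (fun s : ℝ => p + s • d) d s := by
    simpa using ((hasDerivAt_id s).smul_const d).const_add p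
  simpa [Function.comp_def, gradCLM_apply] using
    (hgrad _ (hD hs)).comp_hasDerivWithinAt s hline.hasDerivWithinAt hD

lemma HasGradientOnBox.hasDerivWithinAt_coord (hgrad : HasGradientOnBox F gradF)
    {p : Fin n → ℝ} (hp : p ∈ Icc 0 1) (i : Fin n) :
    HasDerivWithinAt (fun a : ℝ => F (p + a • (Pi.single i 1 : Fin n → ℝ))) (gradF p i)
      (Icc (-p i) (1 - p i)) 0 := by
  have hpi := mem_box_iff.1 hp i
  have hD : MapsTo (fun a : ℝ => p + a • (Pi.single i 1 : Fin n → ℝ)) (Icc (-p i) (1 - p i))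
      (Icc 0 1) := fun a ha =>
    add_smul_single_mem_box hp ⟨by linarith [ha.1], by linarith [ha.2]⟩
  simpa using
    hgrad.hasDerivWithinAt_comp_line hD (s := 0) ⟨by linarith [hpi.1], by linarith [hpi.2]⟩

lemma HasGradientOnBox.tendsto_right_quotient (hgrad : HasGradientOnBox F gradF)
    {p : Fin n → ℝ} (hp : p ∈ Icc 0 1) {i : Fin n} (hpi : p i < 1) :
    Tendsto (fun a : ℝ => (F (p + a • (Pi.single i 1 : Fin n → ℝ)) - F p) / a) (𝓝[>] 0)
      (𝓝 (gradF p i)) := by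
  have h := (hgrad.hasDerivWithinAt_coord hp i).mono_of_mem_nhdsWithin <|
    mem_of_superset (Icc_mem_nhdsGT (sub_pos.2 hpi))
      (Icc_subset_Icc_left (neg_nonpos.2 (mem_box_iff.1 hp i).1))
  refine ((hasDerivWithinAt_iff_tendsto_slope' self_notMem_Ioi).1 h).congr fun a => ?_
  simp [slope_def_field]

lemma HasGradientOnBox.tendsto_left_quotient (hgrad : HasGradientOnBox F gradF)
    {p : Fin n → ℝ} (hp : p ∈ Icc 0 1) {i : Fin n} (hpi : 0 < p i) :
    Tendsto (fun a : ℝ => (F p - F (p - a • (Pi.single i 1 : Fin n → ℝ))) / a) (𝓝[>] 0)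
      (𝓝 (gradF p i)) := by
  have h := (hgrad.hasDerivWithinAt_coord hp i).mono_of_mem_nhdsWithin <|
    mem_of_superset (Icc_mem_nhdsLT (neg_lt_zero.2 hpi))
      (Icc_subset_Icc_right (sub_nonneg.2 (mem_box_iff.1 hp i).2))
  have hneg : Tendsto Neg.neg (𝓝[>] (0 : ℝ)) (𝓝[<] 0) := by
    simpa only [neg_zero] using tendsto_neg_nhdsGT_neg (a := (0 : ℝ))
  have := ((hasDerivWithinAt_iff_tendsto_slope' self_notMem_Iio).1 h).comp hneg
  refine this.congr fun a => ?_
  simp [slope_def_field, neg_smul, ← sub_eq_add_neg, div_neg, ← neg_div]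

end Gradient

namespace DRSubmodular

variable {n : ℕ} {F : (Fin n → ℝ) → ℝ} {gradF : (Fin n → ℝ) → Fin n → ℝ}

theorem grad_antitone (hDR : DRSubmodular F) (hgrad : HasGradientOnBox F gradF)
    {z w : Fin n → ℝ} (hz : z ∈ Icc 0 1) (hw : w ∈ Icc 0 1) (hzw : z ≤ w) :
    gradF w ≤ gradF z := by
  intro i
  set e : Fin n → ℝ := Pi.single i 1
  have hzi := mem_box_iff.1 hz i
  have hwi := mem_box_iff.1 hw i
  rcases hwi.2.lt_or_eq with hw1 | hw1
  · refine le_of_tendsto_of_tendsto (hgrad.tendsto_right_quotient hw hw1)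
      (hgrad.tendsto_right_quotient hz ((hzw i).trans_lt hw1)) ?_
    filter_upwards [Ioo_mem_nhdsGT (sub_pos.2 hw1)] with a ⟨ha, haw⟩
    refine div_le_div_of_nonneg_right (hDR z w hz hw hzw i a ha ?_ ?_) ha.le
    · exact add_smul_single_mem_box hz ⟨by linarith [hzi.1], by linarith [hzw i]⟩
    · exact add_smul_single_mem_box hw ⟨by linarith [hwi.1], by linarith⟩
  rcases (hzw i).lt_or_eq with hlt | heq
  · -- `z i < w i = 1`: only a left quotient exists at `w`; DR applied to `z ≤ w - a • e`
    -- compares it with the right quotient at `z`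
    refine le_of_tendsto_of_tendsto (hgrad.tendsto_left_quotient hw (hzi.1.trans_lt hlt))
      (hgrad.tendsto_right_quotient hz (hlt.trans_eq hw1)) ?_
    filter_upwards [Ioo_mem_nhdsGT (sub_pos.2 hlt)] with a ⟨ha, haw⟩
    have hw' : w - a • e ∈ Icc 0 1 :=
      sub_smul_single_mem_box hw ⟨by linarith [hzi.1], by linarith [hwi.2]⟩
    have hzw' : z ≤ w - a • e := fun j => by
      rcases eq_or_ne j i with rfl | hj
      · simp [e]; linarith
      · simpa [e, hj] using hzw j
    have h := hDR z (w - a • e) hz hw' hzw' i a ha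
      (add_smul_single_mem_box hz ⟨by linarith [hzi.1], by linarith⟩)
      (by rwa [sub_add_cancel])
    rw [sub_add_cancel] at h
    exact div_le_div_of_nonneg_right h ha.le
  · refine le_of_tendsto_of_tendsto (hgrad.tendsto_left_quotient hw (by linarith))
      (hgrad.tendsto_left_quotient hz (by linarith)) ?_
    filter_upwards [Ioo_mem_nhdsGT one_pos] with a ⟨ha, ha1⟩
    have h := hDR (z - a • e) (w - a • e)
      (sub_smul_single_mem_box hz ⟨by linarith, by linarith⟩)
      (sub_smul_single_mem_box hw ⟨by linarith, by linarith⟩)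
      (sub_le_sub_right hzw _) i a ha (by rwa [sub_add_cancel]) (by rwa [sub_add_cancel])
    rw [sub_add_cancel, sub_add_cancel] at h
    exact div_le_div_of_nonneg_right h ha.le

theorem grad_dotProduct_le_sub_le (hDR : DRSubmodular F) (hgrad : HasGradientOnBox F gradF)
    {x y : Fin n → ℝ} (hx : x ∈ Icc 0 1) (hy : y ∈ Icc 0 1) (hxy : x ≤ y) :
    gradF y ⬝ᵥ (y - x) ≤ F y - F x ∧ F y - F x ≤ gradF x ⬝ᵥ (y - x) := by
  have hseg : MapsTo (fun s : ℝ => x + s • (y - x)) (Icc 0 1) (Icc 0 1) :=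
    fun s hs => (convex_Icc 0 1).add_smul_sub_mem hx hy hs
  have hderiv := fun s (hs : s ∈ Icc (0 : ℝ) 1) => hgrad.hasDerivWithinAt_comp_line hseg hs
  obtain ⟨c, hc, hslope⟩ := exists_hasDerivAt_eq_slope (fun s : ℝ => F (x + s • (y - x)))
    (fun s => gradF (x + s • (y - x)) ⬝ᵥ (y - x)) zero_lt_one
    (fun s hs => (hderiv s hs).continuousWithinAt)
    (fun s hs => (hderiv s (Ioo_subset_Icc_self hs)).hasDerivAt (Icc_mem_nhds hs.1 hs.2))
  simp only [one_smul, zero_smul, add_zero, add_sub_cancel, sub_zero, div_one] at hslope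
  have hd : 0 ≤ y - x := sub_nonneg.2 hxy
  have hxc : x ≤ x + c • (y - x) := le_add_of_nonneg_right (smul_nonneg hc.1.le hd)
  have hcy : x + c • (y - x) ≤ y := by
    simpa using add_le_add (le_refl x) (smul_le_smul_of_nonneg_right hc.2.le hd)
  have hmid := hseg (Ioo_subset_Icc_self hc)
  rw [← hslope]
  exact ⟨dotProduct_le_dotProduct_of_nonneg_right (hDR.grad_antitone hgrad hmid hy hcy) hd,
    dotProduct_le_dotProduct_of_nonneg_right (hDR.grad_antitone hgrad hx hmid hxc) hd⟩

theorem concave_of_le (hDR : DRSubmodular F) (hgrad : HasGradientOnBox F gradF)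
    {y w : Fin n → ℝ} (hy : y ∈ Icc 0 1) (hw : w ∈ Icc 0 1) (hyw : y ≤ w)
    {θ : ℝ} (hθ : θ ∈ Icc (0 : ℝ) 1) :
    (1 - θ) * F y + θ * F w ≤ F (y + θ • (w - y)) := by
  set z := y + θ • (w - y)
  have hz : z ∈ Icc 0 1 := (convex_Icc 0 1).add_smul_sub_mem hy hw hθ
  have hd : 0 ≤ w - y := sub_nonneg.2 hyw
  have hyz : y ≤ z := le_add_of_nonneg_right (smul_nonneg hθ.1 hd)
  have hzw : z ≤ w := by
    simpa using add_le_add (le_refl y) (smul_le_smul_of_nonneg_right hθ.2 hd)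
  have hzy : z - y = θ • (w - y) := by simp [z]
  have hwz : w - z = (1 - θ) • (w - y) := by simp only [z, sub_smul, one_smul]; abel
  have hleft := (hDR.grad_dotProduct_le_sub_le hgrad hy hz hyz).1
  have hright := (hDR.grad_dotProduct_le_sub_le hgrad hz hw hzw).2
  rw [hzy, dotProduct_smul, smul_eq_mul] at hleft
  rw [hwz, dotProduct_smul, smul_eq_mul] at hright
  nlinarith [mul_le_mul_of_nonneg_left hleft (sub_nonneg.2 hθ.2),
    mul_le_mul_of_nonneg_left hright hθ.1]

theorem mul_le_apply_sup (hFnonneg : ∀ z ∈ Icc (0 : Fin n → ℝ) 1, 0 ≤ F z)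
    (hDR : DRSubmodular F) (hgrad : HasGradientOnBox F gradF)
    {x y : Fin n → ℝ} (hx : x ∈ Icc 0 1) (hy : y ∈ Icc 0 1)
    {c : ℝ} (hc : c ∈ Icc (0 : ℝ) 1) (hxc : ∀ i, c ≤ 1 - x i) :
    c * F y ≤ F (x ⊔ y) := by
  rcases hc.2.lt_or_eq with hc1 | rfl
  · -- `x ⊔ y = y + (1 - c) • (w - y)`, and `w` stays in the box because `x ≤ 1 - c`
    set θ := 1 - c with hθc
    have hθ : 0 < θ := sub_pos.2 hc1
    set w := y + θ⁻¹ • (x ⊔ y - y)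
    have hyw : y ≤ w :=
      le_add_of_nonneg_right (smul_nonneg (inv_nonneg.2 hθ.le) (sub_nonneg.2 le_sup_right))
    have hw : w ∈ Icc 0 1 := by
      refine ⟨hy.1.trans hyw, fun i => ?_⟩
      have hxi := hxc i
      have hyi := mem_box_iff.1 hy i
      have hgap : x i ⊔ y i - y i ≤ θ * (1 - y i) := by
        refine sub_le_iff_le_add.2 (sup_le ?_ ?_)
        · rw [hθc]; nlinarith [mul_nonneg hc.1 hyi.1]
        · simpa using mul_nonneg hθ.le (sub_nonneg.2 hyi.2)
      simp only [w, Pi.add_apply, Pi.smul_apply, Pi.sub_apply, Pi.sup_apply, smul_eq_mul,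
        Pi.one_apply]
      linarith [(inv_mul_le_iff₀ hθ).2 hgap]
    have hsup : x ⊔ y = y + θ • (w - y) := by simp [w, smul_smul, hθ.ne']
    have h := hDR.concave_of_le hgrad hy hw hyw ⟨hθ.le, by linarith [hc.1]⟩
    rw [← hsup] at h
    nlinarith [hFnonneg w hw]
  · have hx0 : x = 0 := le_antisymm (fun i => show x i ≤ 0 by linarith [hxc i]) hx.1
    simp [hx0, sup_eq_right.2 hy.1]

theorem sub_two_mul_le_grad_dotProduct (hFnonneg : ∀ z ∈ Icc (0 : Fin n → ℝ) 1, 0 ≤ F z)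
    (hDR : DRSubmodular F) (hgrad : HasGradientOnBox F gradF)
    {z y : Fin n → ℝ} (hz : z ∈ Icc 0 1) (hy : y ∈ Icc 0 1)
    {c : ℝ} (hc : c ∈ Icc (0 : ℝ) 1) (hzc : ∀ i, c ≤ 1 - z i) :
    c * F y - 2 * F z ≤ gradF z ⬝ᵥ (y - z) := by
  have hsup : z ⊔ y ∈ Icc 0 1 := ⟨le_sup_of_le_left hz.1, sup_le hz.2 hy.2⟩
  have hinf : z ⊓ y ∈ Icc 0 1 := ⟨le_inf hz.1 hy.1, inf_le_left.trans hz.2⟩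
  have hsplit : y - z = (z ⊔ y - z) - (z - z ⊓ y) := by
    ext i
    rcases le_total (z i) (y i) with h | h <;> simp [h]
  have h1 := (hDR.grad_dotProduct_le_sub_le hgrad hz hsup le_sup_left).2
  have h2 := (hDR.grad_dotProduct_le_sub_le hgrad hinf hz inf_le_left).1
  have h3 := hDR.mul_le_apply_sup hFnonneg hgrad hz hy hc hzc
  rw [hsplit, dotProduct_sub]
  linarith [hFnonneg _ hinf]

end DRSubmodular

section Schedule

lemma harmonicNum_mono : Monotone harmonicNum := fun _ _ h =>
  Finset.sum_le_sum_of_subset_of_nonneg (Finset.range_subset_range.2 h) fun _ _ _ => by positivity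

lemma harmonicNum_pos {T : ℕ} (hT : 1 ≤ T) : 0 < harmonicNum T :=
  lt_of_lt_of_le (by simp [harmonicNum]) (harmonicNum_mono hT)

variable {T j : ℕ}

lemma harmonicNum_div_mem_Icc (hT : 1 ≤ T) (hj : j ≤ T) :
    harmonicNum j / harmonicNum T ∈ Icc (0 : ℝ) 1 :=
  ⟨div_nonneg (Finset.sum_nonneg fun _ _ => by positivity) (harmonicNum_pos hT).le,
    div_le_one_of_le₀ (harmonicNum_mono hj) (harmonicNum_pos hT).le⟩

lemma log_one_add_harmonicNum_div_lt_one (hT : 1 ≤ T) (hj : j ≤ T) :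
    Real.log (1 + harmonicNum j / harmonicNum T) < 1 := by
  have h := harmonicNum_div_mem_Icc hT hj
  calc Real.log (1 + harmonicNum j / harmonicNum T) ≤ Real.log 2 :=
        Real.log_le_log (by linarith [h.1]) (by linarith [h.2])
    _ < 1 := by linarith [Real.log_two_lt_d9]

lemma one_div_one_add_fwTime :
    1 / (1 + fwTime T j) = 1 - Real.log (1 + harmonicNum j / harmonicNum T) := by
  simp [fwTime]

lemma fwTime_div_one_add_fwTime (hT : 1 ≤ T) (hj : j ≤ T) :
    fwTime T j / (1 + fwTime T j) = Real.log (1 + harmonicNum j / harmonicNum T) := by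
  have h := log_one_add_harmonicNum_div_lt_one hT hj
  rw [div_eq_mul_one_div, one_div_one_add_fwTime, fwTime]
  field_simp [(by linarith : 1 - Real.log (1 + harmonicNum j / harmonicNum T) ≠ 0)]
  ring

lemma fwSqa_eq (hT : 1 ≤ T) (hj : j ≤ T) : fwSqa T j = 1 + harmonicNum j / harmonicNum T := by
  rw [fwSqa, fwTime_div_one_add_fwTime hT hj,
    Real.exp_log (by linarith [(harmonicNum_div_mem_Icc hT hj).1])]

lemma one_le_fwSqa (hT : 1 ≤ T) (hj : j ≤ T) : 1 ≤ fwSqa T j := by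
  rw [fwSqa_eq hT hj]; linarith [(harmonicNum_div_mem_Icc hT hj).1]

lemma fwSqa_le_fwSqa_succ (hT : 1 ≤ T) (hj : j < T) : fwSqa T j ≤ fwSqa T (j + 1) := by
  rw [fwSqa_eq hT hj.le, fwSqa_eq hT hj]
  gcongr
  · exact (harmonicNum_pos hT).le
  · exact harmonicNum_mono j.le_succ

lemma fwRatio_eq (hT : 1 ≤ T) (hj : j < T) : fwRatio T j = fwSqa T j / fwSqa T (j + 1) := by
  rw [fwRatio, fwSqa, fwSqa, ← Real.exp_sub, one_div_one_add_fwTime,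
    one_div_one_add_fwTime, fwTime_div_one_add_fwTime hT hj.le,
    fwTime_div_one_add_fwTime hT hj]
  congr 1
  ring

end Schedule

section FrankWolfe

variable {n : ℕ}

theorem fw_iterate_mem_and_coord_le {P : Set (Fin n → ℝ)} (hPsub : P ⊆ Icc 0 1)
    (hPconv : Convex ℝ P) (h0P : (0 : Fin n → ℝ) ∈ P) {T : ℕ} {s : ℕ → ℝ}
    (hs1 : ∀ k ≤ T, 1 ≤ s k) (hs : ∀ k < T, s k ≤ s (k + 1)) {x v : ℕ → Fin n → ℝ}
    (hx0 : x 0 = 0) (hvP : ∀ k < T, v k ∈ P)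
    (hstep : ∀ k < T, x (k + 1) = (s k / s (k + 1)) • x k + (1 - s k / s (k + 1)) • v k) :
    ∀ k ≤ T, x k ∈ P ∧ ∀ i, (s k)⁻¹ ≤ 1 - x k i := by
  intro k
  induction k with
  | zero =>
    intro _
    refine ⟨hx0 ▸ h0P, fun i => ?_⟩
    simpa [hx0] using inv_le_one_of_one_le₀ (hs1 0 (Nat.zero_le T))
  | succ k ih =>
    intro hk
    obtain ⟨hxP, hxc⟩ := ih (Nat.le_of_succ_le hk)
    have hk0 : 0 < s k := zero_lt_one.trans_le (hs1 k (Nat.le_of_succ_le hk))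
    have hk1 : 0 < s (k + 1) := hk0.trans_le (hs k hk)
    have hρ0 : 0 ≤ s k / s (k + 1) := by positivity
    have hρ1 : s k / s (k + 1) ≤ 1 := div_le_one_of_le₀ (hs k hk) hk1.le
    refine ⟨hstep k hk ▸ hPconv hxP (hvP k hk) hρ0 (sub_nonneg.2 hρ1) (by ring),
      fun i => ?_⟩
    have hv1 : v k i ≤ 1 := (mem_box_iff.1 (hPsub (hvP k hk)) i).2
    have hinv : (s (k + 1))⁻¹ = s k / s (k + 1) * (s k)⁻¹ := by field_simp
    rw [hstep k hk, hinv]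
    simp only [Pi.add_apply, Pi.smul_apply, smul_eq_mul]
    nlinarith [mul_le_mul_of_nonneg_left (hxc i) hρ0,
      mul_nonneg (sub_nonneg.2 hρ1) (sub_nonneg.2 hv1)]

theorem le_apply_add_smul_sub_of_smooth {F : (Fin n → ℝ) → ℝ}
    {gradF : (Fin n → ℝ) → Fin n → ℝ} {L : ℝ} (hL : 0 ≤ L)
    (hsmooth : ∀ z ∈ Icc (0 : Fin n → ℝ) 1, ∀ w ∈ Icc (0 : Fin n → ℝ) 1,
      |F w - F z - ∑ i, gradF z i * (w i - z i)| ≤ L / 2 * ∑ i, (w i - z i) ^ 2)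
    {z v : Fin n → ℝ} (hz : z ∈ Icc 0 1) (hv : v ∈ Icc 0 1)
    {γ : ℝ} (hγ : γ ∈ Icc (0 : ℝ) 1) :
    F z + γ * (gradF z ⬝ᵥ (v - z)) - n * L / 2 * γ ^ 2 ≤ F (z + γ • (v - z)) := by
  set w := z + γ • (v - z)
  have h : |F w - F z - gradF z ⬝ᵥ (w - z)| ≤ L / 2 * ∑ i, ((w - z) i) ^ 2 :=
    hsmooth z hz w ((convex_Icc 0 1).add_smul_sub_mem hz hv hγ)
  rw [show w - z = γ • (v - z) from add_sub_cancel_left _ _, dotProduct_smul] at h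
  simp only [Pi.smul_apply, Pi.sub_apply, smul_eq_mul, mul_pow, ← Finset.mul_sum] at h
  have hsq := mul_le_mul_of_nonneg_left (sum_sq_sub_le_card hz hv)
    (mul_nonneg (by linarith : 0 ≤ L / 2) (sq_nonneg γ))
  linarith [(abs_le.1 h).1]

lemma lyapunov_increment_ge {s s' A A' B M c : ℝ} (hs : 0 < s) (hss' : s ≤ s')
    (hA' : A + (1 - s / s') * M - c * (1 - s / s') ^ 2 ≤ A')
    (hM : s⁻¹ * B - 2 * A ≤ M) (hB : s * A ≤ B) :
    -c * (s' - s) ^ 2 ≤ (s' ^ 2 * A' - s' * B) - (s ^ 2 * A - s * B) := by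
  have hs' : 0 < s' := hs.trans_le hss'
  have h1 : s' ^ 2 * A + s' * (s' - s) * M - c * (s' - s) ^ 2 ≤ s' ^ 2 * A' := by
    have hexpand : s' ^ 2 * (A + (1 - s / s') * M - c * (1 - s / s') ^ 2)
        = s' ^ 2 * A + s' * (s' - s) * M - c * (s' - s) ^ 2 := by
      field_simp
    linarith [mul_le_mul_of_nonneg_left hA' (sq_nonneg s')]
  have h2 := mul_le_mul_of_nonneg_left hM (mul_nonneg hs'.le (sub_nonneg.2 hss'))
  have h3 := mul_le_mul_of_nonneg_left hB (by positivity : 0 ≤ (s' - s) ^ 2 * s⁻¹)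
  have hcancel : (s' - s) ^ 2 * s⁻¹ * (s * A) = (s' - s) ^ 2 * A := by field_simp
  have hsplit : s' * (s' - s) * (s⁻¹ * B) = (s' - s) ^ 2 * s⁻¹ * B + (s' - s) * B := by
    field_simp; ring
  linarith

end FrankWolfe

theorem fw_lyapunov_increment_bound_of_nonpos_general
    (n : ℕ) (F : (Fin n → ℝ) → ℝ) (gradF : (Fin n → ℝ) → Fin n → ℝ)
    (L : ℝ) (hL : 0 ≤ L)
    (hFnonneg : ∀ z ∈ Set.Icc (0 : Fin n → ℝ) 1, 0 ≤ F z)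
    (hDR : DRSubmodular F)
    (hgrad : HasGradientOnBox F gradF)
    (hsmooth : ∀ z ∈ Set.Icc (0 : Fin n → ℝ) 1, ∀ w ∈ Set.Icc (0 : Fin n → ℝ) 1,
      |F w - F z - ∑ i, gradF z i * (w i - z i)| ≤ L / 2 * ∑ i, (w i - z i) ^ 2)
    (P : Set (Fin n → ℝ)) (hPsub : P ⊆ Set.Icc 0 1) (hPconv : Convex ℝ P)
    (h0P : (0 : Fin n → ℝ) ∈ P)
    (xstar : Fin n → ℝ) (hxstarP : xstar ∈ P)
    (T : ℕ) (hT : 1 ≤ T)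
    (x v : ℕ → Fin n → ℝ)
    (hx0 : x 0 = 0)
    (hvP : ∀ j < T, v j ∈ P)
    (hvmax : ∀ j < T, ∀ w ∈ P, ∑ i, gradF (x j) i * w i ≤ ∑ i, gradF (x j) i * v j i)
    (hstep : ∀ j < T, x (j + 1) = fwRatio T j • x j + (1 - fwRatio T j) • v j)
    (E : ℕ → ℝ)
    (hE : ∀ j, E j = fwSqa T j ^ 2 * F (x j) - fwSqa T j * F xstar) :
    ∀ j < T, E j ≤ 0 →
      E (j + 1) - E j ≥ -((n : ℝ) * L / 2) * (fwSqa T (j + 1) - fwSqa T j) ^ 2 := by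
  intro j hj hEj
  set s := fwSqa T j
  set s' := fwSqa T (j + 1)
  have hs : 1 ≤ s := one_le_fwSqa hT hj.le
  have hss' : s ≤ s' := fwSqa_le_fwSqa_succ hT hj
  obtain ⟨hxP, hxc⟩ := fw_iterate_mem_and_coord_le hPsub hPconv h0P
    (fun k hk => one_le_fwSqa hT hk) (fun k hk => fwSqa_le_fwSqa_succ hT hk) hx0 hvP
    (fun k hk => fwRatio_eq hT hk ▸ hstep k hk) j hj.le
  have hγ : 1 - s / s' ∈ Icc (0 : ℝ) 1 :=
    ⟨sub_nonneg.2 (div_le_one_of_le₀ hss' (by linarith)),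
      sub_le_self _ (div_nonneg (by linarith) (by linarith))⟩
  have hA' := le_apply_add_smul_sub_of_smooth hL hsmooth (hPsub hxP) (hPsub (hvP j hj)) hγ
  rw [show x j + (1 - s / s') • (v j - x j) = x (j + 1) by
    rw [hstep j hj, fwRatio_eq hT hj]; module] at hA'
  have hmax : gradF (x j) ⬝ᵥ xstar ≤ gradF (x j) ⬝ᵥ v j := hvmax j hj xstar hxstarP
  have hM : s⁻¹ * F xstar - 2 * F (x j) ≤ gradF (x j) ⬝ᵥ (v j - x j) := by
    have := hDR.sub_two_mul_le_grad_dotProduct hFnonneg hgrad (hPsub hxP) (hPsub hxstarP)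
      ⟨inv_nonneg.2 (by linarith), inv_le_one_of_one_le₀ hs⟩ hxc
    rw [dotProduct_sub] at this ⊢
    linarith
  have hB : s * F (x j) ≤ F xstar := by
    rw [hE] at hEj
    exact le_of_mul_le_mul_left (by linarith) (by linarith : (0 : ℝ) < s)
  rw [hE, hE, ge_iff_le]
  exact lyapunov_increment_ge (by linarith) hss' hA' hM hB

/-- With the Lyapunov function `E(t_j) = a_{t_j} F(x(t_j)) - √a_{t_j} F(x*)`,
if `E(t_j) ≤ 0` then `E(t_{j+1}) - E(t_j) ≥ -(nL/2)(√a_{t_{j+1}} - √a_{t_j})²`. -/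
theorem fw_lyapunov_increment_bound_of_nonpos
    (n : ℕ) (F : (Fin n → ℝ) → ℝ) (gradF : (Fin n → ℝ) → Fin n → ℝ)
    (L : ℝ) (hL : 0 ≤ L)
    (hFnonneg : ∀ z ∈ Set.Icc (0 : Fin n → ℝ) 1, 0 ≤ F z)
    (hDR : DRSubmodular F)
    (hgrad : HasGradientOnBox F gradF)
    (hsmooth : ∀ z ∈ Set.Icc (0 : Fin n → ℝ) 1, ∀ w ∈ Set.Icc (0 : Fin n → ℝ) 1,
      |F w - F z - ∑ i, gradF z i * (w i - z i)| ≤ L / 2 * ∑ i, (w i - z i) ^ 2)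
    (P : Set (Fin n → ℝ)) (hPsub : P ⊆ Set.Icc 0 1) (hPconv : Convex ℝ P)
    (h0P : (0 : Fin n → ℝ) ∈ P)
    (xstar : Fin n → ℝ) (hxstarP : xstar ∈ P) (hxstarMax : ∀ z ∈ P, F z ≤ F xstar)
    (T : ℕ) (hT : 1 ≤ T)
    (x v : ℕ → Fin n → ℝ)
    (hx0 : x 0 = 0)
    (hvP : ∀ j < T, v j ∈ P)
    (hvmax : ∀ j < T, ∀ w ∈ P, ∑ i, gradF (x j) i * w i ≤ ∑ i, gradF (x j) i * v j i)
    (hstep : ∀ j < T, x (j + 1) = fwRatio T j • x j + (1 - fwRatio T j) • v j)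
    (E : ℕ → ℝ)
    (hE : ∀ j, E j = fwSqa T j ^ 2 * F (x j) - fwSqa T j * F xstar) :
    ∀ j < T, E j ≤ 0 →
      E (j + 1) - E j ≥ -((n : ℝ) * L / 2) * (fwSqa T (j + 1) - fwSqa T j) ^ 2 :=
  fw_lyapunov_increment_bound_of_nonpos_general n F gradF L hL hFnonneg hDR hgrad hsmooth P hPsub
    hPconv h0P xstar hxstarP T hT x v hx0 hvP hvmax hstep E hE
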